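/- (Gap perturbation, Lemma 4.) Under the uniform stability |E_A[ℓ(S,A,z) − ℓ(S',A,z)]| ≤ κ/n for all z, and boundedness 0 ≤ ℓ ≤ γ, the generalization gaps G(S) = E_A[E_z ℓ(S,A,z) − (1/n)∑_i ℓ(S,A,z_i)] and G(S') satisfy |G(S) − G(S')| ≤ (2κ + γ)/n. -/
import Mathlib


open MeasureTheory

/-- Gap perturbation (Lemma 4): under uniform stability `κ/n` and boundedness
`0 ≤ ℓ ≤ γ`, the generalization gaps of two datasets differing in one sample
differ by at most `(2κ + γ)/n`. -/
theorem gap_perturbation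
    {Ω Z : Type*} [MeasurableSpace Ω] [MeasurableSpace Z]
    (P : Measure Ω) [IsProbabilityMeasure P]
    (μ : Measure Z) [IsProbabilityMeasure μ]
    (n : ℕ) (hn : 1 ≤ n)
    (ℓ ℓ' : Ω → Z → ℝ) (γ κ : ℝ)
    (hℓmeas : Measurable (Function.uncurry ℓ))
    (hℓ'meas : Measurable (Function.uncurry ℓ'))
    (hℓbd : ∀ a w, ℓ a w ∈ Set.Icc 0 γ)
    (hℓ'bd : ∀ a w, ℓ' a w ∈ Set.Icc 0 γ)
    (z z' : Fin n → Z) (istar : Fin n)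
    (hsame : ∀ j, j ≠ istar → z j = z' j)
    (hstab : ∀ w : Z, |∫ a, (ℓ a w - ℓ' a w) ∂P| ≤ κ / n) :
    |(∫ a, ((∫ w, ℓ a w ∂μ) - (1 / (n:ℝ)) * ∑ j, ℓ a (z j)) ∂P) -
      (∫ a, ((∫ w, ℓ' a w ∂μ) - (1 / (n:ℝ)) * ∑ j, ℓ' a (z' j)) ∂P)| ≤
      (2 * κ + γ) / n := by
  have hZne : Nonempty Z := Measure.nonempty_of_neZero μ
  have hnpos : (0:ℝ) < n := by exact_mod_cast hn
  obtain ⟨w0⟩ := hZne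
  have hγ : 0 ≤ γ := le_trans (hℓbd (Classical.choice (Measure.nonempty_of_neZero P)) w0).1
    (hℓbd _ _).2
  have hκn : 0 ≤ κ / n := le_trans (abs_nonneg _) (hstab w0)
  have hκ : 0 ≤ κ := by
    have h := mul_nonneg hκn hnpos.le
    rwa [div_mul_cancel₀ _ hnpos.ne'] at h
  -- pointwise bound on the difference
  have hDbd : ∀ a w, |ℓ a w - ℓ' a w| ≤ γ := fun a w => by
    have h1 := hℓbd a w; have h2 := hℓ'bd a w
    rw [Set.mem_Icc] at h1 h2
    rw [abs_le]; constructor <;> linarith [h1.1, h1.2, h2.1, h2.2]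
  -- generic integrability from boundedness
  have intof : ∀ (f : Ω → ℝ), Measurable f → (∀ a, |f a| ≤ γ) → Integrable f P := by
    intro f hf hbd
    exact (integrable_const γ).mono' hf.aestronglyMeasurable
      (ae_of_all _ fun a => by simpa [Real.norm_eq_abs] using hbd a)
  have intofμ : ∀ (f : Z → ℝ), Measurable f → (∀ w, |f w| ≤ γ) → Integrable f μ := by
    intro f hf hbd
    exact (integrable_const γ).mono' hf.aestronglyMeasurable
      (ae_of_all _ fun w => by simpa [Real.norm_eq_abs] using hbd w)
  have habsℓ : ∀ a w, |ℓ a w| ≤ γ := fun a w => by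
    have h := hℓbd a w; rw [Set.mem_Icc] at h; rw [abs_of_nonneg h.1]; exact h.2
  have habsℓ' : ∀ a w, |ℓ' a w| ≤ γ := fun a w => by
    have h := hℓ'bd a w; rw [Set.mem_Icc] at h; rw [abs_of_nonneg h.1]; exact h.2
  -- integrability of the fixed-a slices
  have intℓa : ∀ a, Integrable (ℓ a) μ := fun a =>
    intofμ _ hℓmeas.of_uncurry_left (habsℓ a)
  have intℓ'a : ∀ a, Integrable (ℓ' a) μ := fun a =>
    intofμ _ hℓ'meas.of_uncurry_left (habsℓ' a)
  -- the four main integrands over P, and their integrability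
  have hA_meas : Measurable fun a => ∫ w, ℓ a w ∂μ :=
    (hℓmeas.stronglyMeasurable.integral_prod_right').measurable
  have hA'_meas : Measurable fun a => ∫ w, ℓ' a w ∂μ :=
    (hℓ'meas.stronglyMeasurable.integral_prod_right').measurable
  have hAbd : ∀ a, |∫ w, ℓ a w ∂μ| ≤ γ := fun a => by
    have := norm_integral_le_of_norm_le_const (μ := μ) (f := fun w => ℓ a w) (C := γ)
      (ae_of_all _ fun w => by simpa [Real.norm_eq_abs] using habsℓ a w)
    simpa [Real.norm_eq_abs] using this
  have hA'bd : ∀ a, |∫ w, ℓ' a w ∂μ| ≤ γ := fun a => by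
    have := norm_integral_le_of_norm_le_const (μ := μ) (f := fun w => ℓ' a w) (C := γ)
      (ae_of_all _ fun w => by simpa [Real.norm_eq_abs] using habsℓ' a w)
    simpa [Real.norm_eq_abs] using this
  have intA : Integrable (fun a => ∫ w, ℓ a w ∂μ) P := intof _ hA_meas hAbd
  have intA' : Integrable (fun a => ∫ w, ℓ' a w ∂μ) P := intof _ hA'_meas hA'bd
  have intℓw : ∀ w, Integrable (fun a => ℓ a w) P := fun w =>
    intof _ hℓmeas.of_uncurry_right (fun a => habsℓ a w)
  have intℓ'w : ∀ w, Integrable (fun a => ℓ' a w) P := fun w =>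
    intof _ hℓ'meas.of_uncurry_right (fun a => habsℓ' a w)
  have intB : Integrable (fun a => (1 / (n:ℝ)) * ∑ j, ℓ a (z j)) P :=
    (integrable_finset_sum Finset.univ fun j _ => intℓw (z j)).const_mul _
  have intB' : Integrable (fun a => (1 / (n:ℝ)) * ∑ j, ℓ' a (z' j)) P :=
    (integrable_finset_sum Finset.univ fun j _ => intℓ'w (z' j)).const_mul _
  -- split the integrals
  rw [integral_sub intA intB, integral_sub intA' intB']
  set IA := ∫ a, (∫ w, ℓ a w ∂μ) ∂P
  set IA' := ∫ a, (∫ w, ℓ' a w ∂μ) ∂P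
  set IB := ∫ a, (1 / (n:ℝ)) * ∑ j, ℓ a (z j) ∂P
  set IB' := ∫ a, (1 / (n:ℝ)) * ∑ j, ℓ' a (z' j) ∂P
  have key : |IA - IA'| + |IB - IB'| ≤ (2 * κ + γ) / n → |(IA - IB) - (IA' - IB')| ≤ (2 * κ + γ) / n := by
    intro h
    calc |(IA - IB) - (IA' - IB')| = |(IA - IA') - (IB - IB')| := by ring_nf
      _ ≤ |IA - IA'| + |IB - IB'| := abs_sub _ _
      _ ≤ _ := h
  apply key
  -- Bound |IA - IA'| ≤ κ / n via Fubini
  have hbound1 : |IA - IA'| ≤ κ / n := by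
    have hswap : IA - IA' = ∫ w, (∫ a, (ℓ a w - ℓ' a w) ∂P) ∂μ := by
      have h1 : IA - IA' = ∫ a, ((∫ w, ℓ a w ∂μ) - (∫ w, ℓ' a w ∂μ)) ∂P :=
        (integral_sub intA intA').symm
      have h2 : ∀ a, (∫ w, ℓ a w ∂μ) - (∫ w, ℓ' a w ∂μ) = ∫ w, (ℓ a w - ℓ' a w) ∂μ :=
        fun a => (integral_sub (intℓa a) (intℓ'a a)).symm
      rw [h1]
      simp_rw [h2]
      refine integral_integral_swap ?_
      have hmeas : Measurable (Function.uncurry fun a w => ℓ a w - ℓ' a w) := by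
        have : (Function.uncurry fun a w => ℓ a w - ℓ' a w)
            = fun p => Function.uncurry ℓ p - Function.uncurry ℓ' p := rfl
        rw [this]; exact hℓmeas.sub hℓ'meas
      refine (integrable_const γ).mono' hmeas.aestronglyMeasurable
        (ae_of_all _ fun p => ?_)
      simpa [Real.norm_eq_abs, Function.uncurry] using hDbd p.1 p.2
    rw [hswap]
    have := norm_integral_le_of_norm_le_const (μ := μ)
      (f := fun w => ∫ a, (ℓ a w - ℓ' a w) ∂P) (C := κ / n)
      (ae_of_all _ fun w => by simpa [Real.norm_eq_abs] using hstab w)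
    simpa [Real.norm_eq_abs] using this
  -- Bound |IB - IB'| ≤ (κ + γ)/n
  have hbound2 : |IB - IB'| ≤ (κ + γ) / n := by
    have hsplit : IB - IB' = (1 / (n:ℝ)) * ∑ j, ∫ a, (ℓ a (z j) - ℓ' a (z' j)) ∂P := by
      have h1 : IB - IB' = ∫ a, ((1 / (n:ℝ)) * ∑ j, ℓ a (z j)
          - (1 / (n:ℝ)) * ∑ j, ℓ' a (z' j)) ∂P := (integral_sub intB intB').symm
      rw [h1]
      have h2 : ∀ a, (1 / (n:ℝ)) * ∑ j, ℓ a (z j) - (1 / (n:ℝ)) * ∑ j, ℓ' a (z' j)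
          = (1 / (n:ℝ)) * ∑ j, (ℓ a (z j) - ℓ' a (z' j)) := by
        intro a; rw [Finset.sum_sub_distrib]; ring
      simp_rw [h2]
      rw [integral_const_mul]
      congr 1
      rw [integral_finset_sum]
      intro j _
      exact (intℓw (z j)).sub (intℓ'w (z' j))
    rw [hsplit]
    have htj : ∀ j : Fin n, j ≠ istar → |∫ a, (ℓ a (z j) - ℓ' a (z' j)) ∂P| ≤ κ / n := by
      intro j hj
      rw [← hsame j hj]
      exact hstab (z j)
    have htstar : |∫ a, (ℓ a (z istar) - ℓ' a (z' istar)) ∂P| ≤ γ := by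
      have := norm_integral_le_of_norm_le_const (μ := P)
        (f := fun a => ℓ a (z istar) - ℓ' a (z' istar)) (C := γ)
        (ae_of_all _ fun a => by
          have h1 := hℓbd a (z istar); have h2 := hℓ'bd a (z' istar)
          rw [Set.mem_Icc] at h1 h2
          show ‖ℓ a (z istar) - ℓ' a (z' istar)‖ ≤ γ
          rw [Real.norm_eq_abs, abs_le]
          constructor <;> linarith [h1.1, h1.2, h2.1, h2.2])
      simpa [Real.norm_eq_abs] using this
    have hsum : |∑ j, ∫ a, (ℓ a (z j) - ℓ' a (z' j)) ∂P| ≤ κ + γ := by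
      calc |∑ j, ∫ a, (ℓ a (z j) - ℓ' a (z' j)) ∂P|
          ≤ ∑ j, |∫ a, (ℓ a (z j) - ℓ' a (z' j)) ∂P| := Finset.abs_sum_le_sum_abs _ _
        _ = (∑ j ∈ Finset.univ.erase istar, |∫ a, (ℓ a (z j) - ℓ' a (z' j)) ∂P|)
            + |∫ a, (ℓ a (z istar) - ℓ' a (z' istar)) ∂P| :=
            (Finset.sum_erase_add _ _ (Finset.mem_univ istar)).symm
        _ ≤ (Finset.univ.erase istar).card • (κ / n) + γ := by
            gcongr
            exact Finset.sum_le_card_nsmul _ _ _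
              (fun j hj => htj j (Finset.ne_of_mem_erase hj))
        _ ≤ κ + γ := by
            have hcard : ((Finset.univ.erase istar).card : ℝ) ≤ n := by
              rw [Finset.card_erase_of_mem (Finset.mem_univ istar)]
              simp only [Finset.card_univ, Fintype.card_fin]
              exact_mod_cast Nat.sub_le n 1
            have : ((Finset.univ.erase istar).card : ℝ) * (κ / n) ≤ n * (κ / n) :=
              mul_le_mul_of_nonneg_right hcard hκn
            rw [nsmul_eq_mul]
            have hnk : (n:ℝ) * (κ / n) = κ := by field_simp
            linarith
    rw [abs_mul, abs_of_nonneg (by positivity : (0:ℝ) ≤ 1 / (n:ℝ))]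
    rw [div_eq_mul_inv (κ + γ), mul_comm (κ + γ)]
    rw [one_div]
    exact mul_le_mul_of_nonneg_left hsum (by positivity)
  calc |IA - IA'| + |IB - IB'| ≤ κ / n + (κ + γ) / n := add_le_add hbound1 hbound2
    _ = (2 * κ + γ) / n := by ring
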